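/- arXiv:2001.06802 — 2 statements merged into one kernel-verified Lean document; each statement's English description precedes it below -/
import Mathlib

section
/- The cluster mutation map C_k^{(ε)} respects the skew-symmetric forms: B_T(C_k^{(ε)}(x'_e), C_k^{(ε)}(x'_f)) = B_{T'}(x'_e, x'_f) = ε'_{ef} for all e,f ∈ I, where B_T(x_e,x_f) = ε_{ef} and B_{T'}(x'_e,x'_f) = ε'_{ef}. -/
noncomputable section

/-- The positive part `[a]₊ = max(a,0)` of a real number. -/
def plusPart (a : ℝ) : ℝ := max a 0

/-- Matrix mutation at `k`: `ε'_{ef} = −ε_{ef}` if `k ∈ {e,f}`, and otherwise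
`ε'_{ef} = ε_{ef} + (|ε_{ek}|ε_{kf} + ε_{ek}|ε_{kf}|)/2`. -/
def mutMat {I : Type*} [DecidableEq I] (ε : I → I → ℝ) (k : I) : I → I → ℝ :=
  fun e f =>
    if e = k ∨ f = k then -ε e f
    else ε e f + (|ε e k| * ε k f + ε e k * |ε k f|) / 2

/-- The cluster mutation linear map `C_k^{(ϵ)}` from the mutated space (with basis
`bNew`) to the original space (with basis `bOld` and exchange matrix `ε`), sending
`x'_k ↦ −x_k` and `x'_e ↦ x_e + [ϵ ε_{ek}]₊ x_k` for `e ≠ k`. -/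
def mutMap {I : Type*} [Fintype I] [DecidableEq I]
    {M M' : Type*} [AddCommGroup M] [Module ℝ M] [AddCommGroup M'] [Module ℝ M']
    (bNew : Module.Basis I ℝ M') (bOld : Module.Basis I ℝ M)
    (ε : I → I → ℝ) (k : I) (ϵ : ℝ) : M' →ₗ[ℝ] M :=
  bNew.constr ℝ fun e =>
    if e = k then -(bOld k) else bOld e + plusPart (ϵ * ε e k) • bOld k

lemma plusPart_eq_half_add_abs (x : ℝ) : plusPart x = (x + |x|) / 2 := by
  rcases abs_cases x with ⟨hx, -⟩ | ⟨hx, hneg⟩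
  · rw [plusPart, hx, max_eq_left (abs_nonneg x |>.trans_eq hx)]
    ring
  · rw [plusPart, hx, max_eq_right hneg.le]
    ring

/-- The `ϵ`-dependent parts cancel, which is why both signs give the same mutation rule. -/
lemma plusPart_mul_add_plusPart_mul_neg {ϵ : ℝ} (hϵ : |ϵ| = 1) (a b : ℝ) :
    plusPart (ϵ * a) * b + plusPart (ϵ * -b) * a = (|a| * b + a * |b|) / 2 := by
  simp only [plusPart_eq_half_add_abs, abs_mul, abs_neg, hϵ]
  ring

section mutMap

variable {I : Type*} [Fintype I] [DecidableEq I]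
  {M M' : Type*} [AddCommGroup M] [Module ℝ M] [AddCommGroup M'] [Module ℝ M']
  (bNew : Module.Basis I ℝ M') (bOld : Module.Basis I ℝ M) (ε : I → I → ℝ) (k : I) (ϵ : ℝ)

lemma mutMap_basis_self : mutMap bNew bOld ε k ϵ (bNew k) = -bOld k := by
  simp only [mutMap, Module.Basis.constr_basis, if_true]

lemma mutMap_basis_of_ne {e : I} (he : e ≠ k) :
    mutMap bNew bOld ε k ϵ (bNew e) = bOld e + plusPart (ϵ * ε e k) • bOld k := by
  simp only [mutMap, Module.Basis.constr_basis, if_neg he]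

variable {bOld ε ϵ} in
theorem mutMap_apply_basis_apply_basis (hskew : ∀ e f, ε f e = -ε e f) (hϵ : |ϵ| = 1)
    (B : M →ₗ[ℝ] M →ₗ[ℝ] ℝ) (hB : ∀ e f, B (bOld e) (bOld f) = ε e f) (e f : I) :
    B (mutMap bNew bOld ε k ϵ (bNew e)) (mutMap bNew bOld ε k ϵ (bNew f)) = mutMat ε k e f := by
  have hkk : ε k k = 0 := by linarith [hskew k k]
  by_cases he : e = k <;> by_cases hf : f = k
  · subst he hf
    simp [mutMap_basis_self, mutMat, hB, hkk]
  · subst he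
    simp [mutMap_basis_self, mutMap_basis_of_ne _ _ _ _ _ hf, mutMat, hB, hkk]
  · subst hf
    simp [mutMap_basis_self, mutMap_basis_of_ne _ _ _ _ _ he, mutMat, hB, hkk]
  · simp only [mutMap_basis_of_ne _ _ _ _ _ he, mutMap_basis_of_ne _ _ _ _ _ hf, map_add, map_smul,
      LinearMap.add_apply, LinearMap.smul_apply, smul_eq_mul, hB, hkk, mutMat, he, hf, or_self,
      if_false, hskew k f]
    linarith [plusPart_mul_add_plusPart_mul_neg hϵ (ε e k) (ε k f)]

end mutMap

/-- `C_k^{(ϵ)}` respects the skew-symmetric forms: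
`B_T(C_k^{(ϵ)} x'_e, C_k^{(ϵ)} x'_f) = B_{T'}(x'_e, x'_f) = ε'_{ef}`. -/
theorem mutMap_respects_forms
    {I : Type*} [Fintype I] [DecidableEq I]
    {M M' : Type*} [AddCommGroup M] [Module ℝ M] [AddCommGroup M'] [Module ℝ M']
    (ε : I → I → ℝ) (hskew : ∀ e f, ε f e = -ε e f) (k : I)
    (ϵ : ℝ) (hϵ : ϵ = 1 ∨ ϵ = -1)
    (bT : Module.Basis I ℝ M) (bT' : Module.Basis I ℝ M')
    (BT : M →ₗ[ℝ] M →ₗ[ℝ] ℝ) (BT' : M' →ₗ[ℝ] M' →ₗ[ℝ] ℝ)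
    (hBT : ∀ e f, BT (bT e) (bT f) = ε e f)
    (hBT' : ∀ e f, BT' (bT' e) (bT' f) = mutMat ε k e f) :
    ∀ e f,
      BT ((mutMap bT' bT ε k ϵ) (bT' e)) ((mutMap bT' bT ε k ϵ) (bT' f)) =
        BT' (bT' e) (bT' f) ∧
      BT' (bT' e) (bT' f) = mutMat ε k e f := by
  have habs : |ϵ| = 1 := by rcases hϵ with rfl | rfl <;> norm_num
  intro e f
  rw [hBT' e f]
  exact ⟨mutMap_apply_basis_apply_basis bT' k hskew habs BT hBT e f, rfl⟩
end
end

section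
/- The square identity for cluster mutation matrices: assume ε_{ij} = 0 for distinct i,j ∈ I. Let T⁽⁰⁾ → T⁽¹⁾ → T⁽²⁾ → T⁽³⁾ → T⁽⁰⁾ be the seeds obtained by mutating at i, j, i, j in turn, with the exchange matrices transformed by the standard mutation rule at each step. Then the composition C⁽¹⁾C⁽²⁾C⁽³⁾C⁽⁴⁾ : V_{T⁽⁰⁾} → V_{T⁽⁰⁾} of the four mutation linear maps with signs +, +, −, − equals the identity. -/
/-!
Group the four maps into two pairs. If `η_{ij} = η_{ji} = 0`, mutating at `i` and then at
`j` with a common sign `ϵ` gives the map `x_i ↦ -x_i`, `x_j ↦ -x_j`,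
`x_e ↦ x_e + [ϵ η_{ei}]₊ x_i + [ϵ η_{ej}]₊ x_j`, which is an involution. Mutating `ε` at `i`
and then at `j` negates its `i`- and `j`-columns, so the second pair (sign `−`) is the same
map as the first pair (sign `+`), and the whole composite is the square of an involution.
-/

noncomputable section

lemma plusPart_zero : plusPart 0 = 0 := max_self 0

section Mutation

variable {I : Type*} [DecidableEq I]

lemma mutMat_apply_right_self (η : I → I → ℝ) (k e : I) : mutMat η k e k = -η e k := by
  simp [mutMat]

lemma mutMat_apply_of_ne_of_eq_zero {η : I → I → ℝ} {k f : I} (hf : f ≠ k) (h : η k f = 0)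
    (e : I) : mutMat η k e f = η e f := by
  by_cases he : e = k
  · simp [mutMat, he, h]
  · simp [mutMat, he, hf, h]

variable [Fintype I] {M M' : Type*} [AddCommGroup M] [Module ℝ M] [AddCommGroup M']
  [Module ℝ M'] (bNew : Module.Basis I ℝ M') (bOld : Module.Basis I ℝ M)

lemma mutMap_apply_self (η : I → I → ℝ) (k : I) (ϵ : ℝ) :
    mutMap bNew bOld η k ϵ (bNew k) = -bOld k := by
  rw [mutMap, Module.Basis.constr_basis, if_pos rfl]

lemma mutMap_apply_of_ne (η : I → I → ℝ) {k e : I} (he : e ≠ k) (ϵ : ℝ) :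
    mutMap bNew bOld η k ϵ (bNew e) = bOld e + plusPart (ϵ * η e k) • bOld k := by
  rw [mutMap, Module.Basis.constr_basis, if_neg he]

lemma mutMap_apply_of_eq_zero {η : I → I → ℝ} {k e : I} (he : e ≠ k) (h : η e k = 0)
    (ϵ : ℝ) :
    mutMap bNew bOld η k ϵ (bNew e) = bOld e := by
  simp [mutMap_apply_of_ne bNew bOld η he, h, plusPart_zero]

end Mutation

section PairReflection

variable {I : Type*} [DecidableEq I] {M : Type*} [AddCommGroup M] [Module ℝ M]
  (b : Module.Basis I ℝ M) (i j : I) (α β : I → ℝ)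

def pairReflection : M →ₗ[ℝ] M :=
  b.constr ℝ fun e => if e = i ∨ e = j then -b e else b e + α e • b i + β e • b j

lemma pairReflection_apply_of_mem {e : I} (he : e = i ∨ e = j) :
    pairReflection b i j α β (b e) = -b e := by
  rw [pairReflection, Module.Basis.constr_basis, if_pos he]

lemma pairReflection_apply_of_ne_of_ne {e : I} (hei : e ≠ i) (hej : e ≠ j) :
    pairReflection b i j α β (b e) = b e + α e • b i + β e • b j := by
  rw [pairReflection, Module.Basis.constr_basis, if_neg (by tauto)]

lemma pairReflection_comp_self :
    (pairReflection b i j α β).comp (pairReflection b i j α β) = LinearMap.id := by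
  refine b.ext fun e => ?_
  rw [LinearMap.comp_apply, LinearMap.id_apply]
  by_cases he : e = i ∨ e = j
  · rw [pairReflection_apply_of_mem b i j α β he, map_neg,
      pairReflection_apply_of_mem b i j α β he, neg_neg]
  · push Not at he
    simp only [pairReflection_apply_of_ne_of_ne b i j α β he.1 he.2, map_add, map_smul,
      pairReflection_apply_of_mem b i j α β (Or.inl rfl),
      pairReflection_apply_of_mem b i j α β (Or.inr rfl)]
    module

variable [Fintype I]

lemma mutMap_comp_mutMap_mutMat {η : I → I → ℝ} (hij : i ≠ j) (hij0 : η i j = 0)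
    (hji0 : η j i = 0) (ϵ : ℝ) :
    (mutMap b b η i ϵ).comp (mutMap b b (mutMat η i) j ϵ)
      = pairReflection b i j (fun e => plusPart (ϵ * η e i))
          (fun e => plusPart (ϵ * η e j)) := by
  have hcol : ∀ e, mutMat η i e j = η e j := mutMat_apply_of_ne_of_eq_zero hij.symm hij0
  refine b.ext fun e => ?_
  rw [LinearMap.comp_apply]
  by_cases hei : e = i
  · rw [hei, mutMap_apply_of_eq_zero b b hij (by rw [hcol, hij0]), mutMap_apply_self,
      pairReflection_apply_of_mem b i j _ _ (Or.inl rfl)]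
  by_cases hej : e = j
  · rw [hej, mutMap_apply_self, map_neg, mutMap_apply_of_eq_zero b b hij.symm hji0,
      pairReflection_apply_of_mem b i j _ _ (Or.inr rfl)]
  rw [mutMap_apply_of_ne b b _ hej, map_add, map_smul, mutMap_apply_of_ne b b _ hei,
    mutMap_apply_of_eq_zero b b hij.symm hji0, hcol,
    pairReflection_apply_of_ne_of_ne b i j _ _ hei hej]

end PairReflection

/-- The square identity: if `ε_{ij} = 0`, the composition of the four mutation
linear maps (mutations at `i, j, i, j` with signs `+, +, −, −`) is the identity. -/
theorem mutMap_square_identity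
    {I : Type*} [Fintype I] [DecidableEq I]
    {M : Type*} [AddCommGroup M] [Module ℝ M]
    (ε : I → I → ℝ) (hskew : ∀ e f, ε f e = -ε e f)
    (i j : I) (hij : i ≠ j) (h0 : ε i j = 0)
    (b : Module.Basis I ℝ M) :
    (mutMap b b ε i 1).comp
      ((mutMap b b (mutMat ε i) j 1).comp
        ((mutMap b b (mutMat (mutMat ε i) j) i (-1)).comp
          (mutMap b b (mutMat (mutMat (mutMat ε i) j) i) j (-1)))) = LinearMap.id := by
  have hji0 : ε j i = 0 := by rw [hskew, h0, neg_zero]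
  have hθi : ∀ e, mutMat (mutMat ε i) j e i = -ε e i := fun e => by
    rw [mutMat_apply_of_ne_of_eq_zero hij (by rw [mutMat_apply_right_self, hji0, neg_zero]),
      mutMat_apply_right_self]
  have hθj : ∀ e, mutMat (mutMat ε i) j e j = -ε e j := fun e => by
    rw [mutMat_apply_right_self, mutMat_apply_of_ne_of_eq_zero hij.symm h0]
  rw [← LinearMap.comp_assoc, mutMap_comp_mutMap_mutMat b i j hij h0 hji0,
    mutMap_comp_mutMap_mutMat b i j hij (by rw [hθj, h0, neg_zero]) (by rw [hθi, hji0, neg_zero])]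
  simp only [hθi, hθj, neg_one_mul, neg_neg, one_mul]
  exact pairReflection_comp_self b i j _ _
end
end
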